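/- Let k be a commutative ring of characteristic zero. Fix positive integers a_0 < a_1 < ⋯ < a_n, block sizes c_0, …, c_n ≥ 1, and let R := k[x_{ij} : 0 ≤ i ≤ n, 1 ≤ j ≤ c_i] be the polynomial ring graded by wt(x_{ij}) = a_i. Let d ≥ 0 and let V_d be a k-submodule of the weighted-homogeneous degree-d part of R satisfying the nondegeneracy hypothesis: for every quotient ring k' of k, every b > 0, and every k'-derivation ∂' of weight −b of the subring k'[x_{ij} : i ≥ 1] in the variables of weight > a_0, if ∂' vanishes on the image V'_d of V_d (reduce coefficients along k → k' and set all weight-a_0 variables x_{0j} to 0), then ∂' = 0. Then for every b > 0, every k-derivation ∂ of R of weight −b satisfying ∂(V_d) = 0 and ∂(x_{0j}) = 0 for all 1 ≤ j ≤ c_0 is the zero derivation. (Paper's Claim II.e: the kernel of the projection pr on L_{−b}(V_d) consists only of the null derivation.) -/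

import Mathlib

/-- The index set of the variables `x_{ij}`, `0 ≤ i ≤ n`, `1 ≤ j ≤ c i`:
blocks `i = 0,…,n` of sizes `c i`. -/
abbrev BlockIdx (n : ℕ) (c : Fin (n + 1) → ℕ) : Type := (i : Fin (n + 1)) × Fin (c i)

/-- The weight of the variable `x_{ij}` is `a i`. -/
def blockWt {n : ℕ} {c : Fin (n + 1) → ℕ} (a : Fin (n + 1) → ℕ) (s : BlockIdx n c) : ℤ :=
  a s.1

/-- A derivation of a graded polynomial ring (weights `w`) has weight `-b` if each `∂ x_s` is
weighted homogeneous of degree `w s - b` (hence zero when `w s - b < 0`, since all weights are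
nonnegative). -/
def DerivationHasWt {k : Type*} [CommRing k] {τ : Type*} (w : τ → ℤ) (b : ℤ)
    (der : Derivation k (MvPolynomial τ k) (MvPolynomial τ k)) : Prop :=
  ∀ s : τ, MvPolynomial.IsWeightedHomogeneous w (der (MvPolynomial.X s)) (w s - b)

/-- The ring map `k[x_{ij}] → k'[x_{ij} : i ≥ 1]`, reducing coefficients along the quotient
`k → k' = k ⧸ J` and setting the weight-`a 0` variables `x_{0j}` to `0`. -/
noncomputable def restrictBlocks {k : Type*} [CommRing k] (n : ℕ) (c : Fin (n + 1) → ℕ)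
    (J : Ideal k) :
    MvPolynomial (BlockIdx n c) k →+*
      MvPolynomial {s : BlockIdx n c // s.1 ≠ 0} (k ⧸ J) :=
  (MvPolynomial.aeval fun s : BlockIdx n c =>
      if h : s.1 = 0 then 0 else MvPolynomial.X (⟨s, h⟩ : {s : BlockIdx n c // s.1 ≠ 0})
    ).toRingHom.comp (MvPolynomial.map (Ideal.Quotient.mk J))

/-!
Write `R = A[x_{01}, …, x_{0c_0}]` with `A = k[x_{ij} : i ≥ 1]`. A derivation `∂` of `R` killing the
`x_{0j}` is determined by the derivations `∂_γ q := [x_0^γ] ∂ q` of `A`, and `∂_γ` has weight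
`-(b + a_0 |γ|)`. For `f ∈ V_d`, the `x_0^γ`-coefficient of `∂ f = 0` reads
`∑_{β ≤ γ} ∂_{γ-β} ([x_0^β] f) = 0`. By induction on `γ` every term with `β ≠ 0` vanishes, so
`∂_γ` kills the constant terms `[x_0^0] f`, which make up `V'_d` for `k' = k`; nondegeneracy then
forces `∂_γ = 0`, hence `∂ = 0`.
-/

namespace Finsupp

variable {σ : Type*}

theorem subtypeDomain_single_of_pos {q : σ → Prop} {s : σ} (h : q s) (m : ℕ) :
    (single s m).subtypeDomain q = single ⟨s, h⟩ m := by
  classical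
  ext ⟨t, ht⟩
  simp [single_apply, Subtype.ext_iff]

theorem subtypeDomain_single_of_neg {q : σ → Prop} {s : σ} (h : ¬q s) (m : ℕ) :
    (single s m).subtypeDomain q = 0 :=
  subtypeDomain_eq_zero_iff'.mpr fun _ ht => single_eq_of_ne fun e => h (e ▸ ht)

theorem weight_subtypeDomain_add_weight_subtypeDomain {M : Type*} [AddCommMonoid M]
    (p : σ → Prop) [DecidablePred p] (w : σ → M) (u : σ →₀ ℕ) :
    weight (fun s : {s // p s} => w s) (u.subtypeDomain p) +
      weight (fun s : {s // ¬p s} => w s) (u.subtypeDomain (¬p ·)) = weight w u := by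
  simp only [weight_apply, Finsupp.sum, support_subtypeDomain, subtypeDomain_apply]
  rw [Finset.sum_subtype_eq_sum_filter (f := fun s => u s • w s),
    Finset.sum_subtype_eq_sum_filter (f := fun s => u s • w s),
    Finset.sum_filter_add_sum_filter_not]

theorem weight_const {M : Type*} [AddCommMonoid M] (m : M) (u : σ →₀ ℕ) :
    weight (fun _ => m) u = degree u • m := by
  simp [weight_apply, Finsupp.sum, degree_apply, Finset.sum_smul]

theorem tsub_lt_self_of_ne_zero {β γ : σ →₀ ℕ} (hβγ : β ≤ γ) (hβ : β ≠ 0) : γ - β < γ :=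
  lt_of_le_of_ne tsub_le_self fun h => hβ (by simpa [h] using tsub_add_cancel_of_le hβγ)

end Finsupp

namespace Derivation

variable {k R S : Type*} [CommRing k] [CommRing R] [CommRing S] [Algebra k R] [Algebra k S]

noncomputable def conjAlgEquiv (e : R ≃ₐ[k] S) (D : Derivation k R R) : Derivation k S S where
  toLinearMap := e.toLinearMap ∘ₗ D.toLinearMap ∘ₗ e.symm.toLinearMap
  map_one_eq_zero' := by simp
  leibniz' x y := by simp

theorem conjAlgEquiv_apply (e : R ≃ₐ[k] S) (D : Derivation k R R) (x : S) :
    D.conjAlgEquiv e x = e (D (e.symm x)) := rfl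

theorem conjAlgEquiv_eq_zero_iff (e : R ≃ₐ[k] S) (D : Derivation k R R) :
    D.conjAlgEquiv e = 0 ↔ D = 0 := by
  refine ⟨fun h => ext fun x => ?_, fun h => by ext; simp [conjAlgEquiv_apply, h]⟩
  simpa [conjAlgEquiv_apply] using congr($h (e x))

end Derivation

namespace MvPolynomial

section SplitVariables

variable {R : Type*} [CommRing R] {σ : Type*} (p : σ → Prop) [DecidablePred p]

noncomputable def splitVars :
    MvPolynomial σ R ≃ₐ[R] MvPolynomial {s // p s} (MvPolynomial {s // ¬p s} R) :=
  (renameEquiv R (Equiv.sumCompl p).symm).trans (sumAlgEquiv R _ _)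

@[simp] theorem splitVars_C (r : R) : splitVars p (C r) = C (C r) := by
  simp [splitVars, sumAlgEquiv_C_inl]

theorem splitVars_X_of_pos {s : σ} (h : p s) : splitVars (R := R) p (X s) = X ⟨s, h⟩ := by
  simp [splitVars, Equiv.sumCompl_symm_apply_of_pos h, sumAlgEquiv_X_inl]

theorem splitVars_X_of_neg {s : σ} (h : ¬p s) : splitVars (R := R) p (X s) = C (X ⟨s, h⟩) := by
  simp [splitVars, Equiv.sumCompl_symm_apply_of_neg h, sumAlgEquiv_X_inr]

theorem splitVars_symm_X (s : {s // p s}) : (splitVars (R := R) p).symm (X s) = X s.1 := by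
  rw [AlgEquiv.symm_apply_eq, splitVars_X_of_pos p s.2]

theorem splitVars_symm_C_X (t : {s // ¬p s}) : (splitVars (R := R) p).symm (C (X t)) = X t.1 := by
  rw [AlgEquiv.symm_apply_eq, splitVars_X_of_neg p t.2]

theorem splitVars_monomial (u : σ →₀ ℕ) (r : R) :
    splitVars p (monomial u r) =
      monomial (u.subtypeDomain p) (monomial (u.subtypeDomain (¬p ·)) r) := by
  induction u using Finsupp.induction with
  | zero => simp [monomial_zero']
  | single_add s m u _ _ ih =>
    rw [monomial_single_add, map_mul, map_pow, ih, Finsupp.subtypeDomain_add,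
      Finsupp.subtypeDomain_add]
    by_cases h : p s
    · rw [splitVars_X_of_pos p h, Finsupp.subtypeDomain_single_of_pos h,
        Finsupp.subtypeDomain_single_of_neg (q := (¬p ·)) (not_not_intro h), zero_add,
        X_pow_eq_monomial, monomial_mul, one_mul]
    · rw [splitVars_X_of_neg p h, Finsupp.subtypeDomain_single_of_neg h,
        Finsupp.subtypeDomain_single_of_pos (q := (¬p ·)) h, zero_add, ← map_pow,
        X_pow_eq_monomial, C_mul_monomial, monomial_mul, one_mul]

theorem IsWeightedHomogeneous.coeff_splitVars {M : Type*} [AddCommGroup M] {w : σ → M} {m : M}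
    {f : MvPolynomial σ R} (hf : IsWeightedHomogeneous w f m) (α : {s // p s} →₀ ℕ) :
    IsWeightedHomogeneous (fun t : {s // ¬p s} => w t) (coeff α (splitVars p f))
      (m - Finsupp.weight (fun s : {s // p s} => w s) α) := by
  classical
  rw [f.as_sum]
  simp only [map_sum, splitVars_monomial, coeff_sum, coeff_monomial]
  refine IsWeightedHomogeneous.sum _ _ _ fun u hu => ?_
  split_ifs with hα
  · refine isWeightedHomogeneous_monomial _ _ _ ?_
    rw [← hf (mem_support_iff.mp hu), ← hα, eq_sub_iff_add_eq',
      Finsupp.weight_subtypeDomain_add_weight_subtypeDomain]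
  · exact isWeightedHomogeneous_zero _ _ _

end SplitVariables

section CoeffDerivation

variable {k A τ : Type*} [CommRing k] [CommRing A] [Algebra k A]
  (D : Derivation k (MvPolynomial τ A) (MvPolynomial τ A))

noncomputable def coeffDerivation (γ : τ →₀ ℕ) : Derivation k A A where
  toLinearMap := (lcoeff A γ).restrictScalars k ∘ₗ D.toLinearMap ∘ₗ
    (Algebra.linearMap A (MvPolynomial τ A)).restrictScalars k
  map_one_eq_zero' := by simp
  leibniz' x y := by simp [coeff_C_mul]

theorem coeffDerivation_apply (γ : τ →₀ ℕ) (x : A) :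
    coeffDerivation D γ x = coeff γ (D (C x)) := rfl

variable {D}

theorem derivation_monomial_one (hX : ∀ s, D (X s) = 0) (β : τ →₀ ℕ) :
    D (monomial β (1 : A)) = 0 := by
  induction β using Finsupp.induction with
  | zero => simp [monomial_zero']
  | single_add s m β _ _ ih => simp [monomial_single_add, Derivation.leibniz, ih, hX]

theorem coeff_derivation_eq_coeffDerivation (hX : ∀ s, D (X s) = 0) {γ : τ →₀ ℕ}
    (hlt : ∀ β < γ, coeffDerivation D β = 0) (g : MvPolynomial τ A) :
    coeff γ (D g) = coeffDerivation D γ (coeff 0 g) := by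
  classical
  induction g using induction_on' with
  | monomial β x =>
    rw [← mul_one x, ← C_mul_monomial, Derivation.leibniz, derivation_monomial_one hX, smul_zero,
      zero_add, smul_eq_mul, coeff_monomial_mul', coeff_C_mul, coeff_monomial, one_mul,
      ← coeffDerivation_apply]
    split_ifs with hβγ hβ hβ
    · subst hβ; simp
    · rw [hlt _ (Finsupp.tsub_lt_self_of_ne_zero hβγ hβ), mul_zero, map_zero,
        Derivation.zero_apply]
    · simp [hβ] at hβγ
    · rw [mul_zero, map_zero]
  | add f g hf hg => rw [map_add, coeff_add, hf, hg, coeff_add, map_add]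

theorem coeffDerivation_eq_zero_of_forall (hX : ∀ s, D (X s) = 0) {W : Set (MvPolynomial τ A)}
    (hW : ∀ g ∈ W, D g = 0)
    (h : ∀ γ, (∀ g ∈ W, coeffDerivation D γ (coeff 0 g) = 0) → coeffDerivation D γ = 0)
    (γ : τ →₀ ℕ) : coeffDerivation D γ = 0 := by
  induction γ using WellFoundedLT.induction with
  | ind γ ih =>
    refine h γ fun g hg => ?_
    rw [← coeff_derivation_eq_coeffDerivation hX ih, hW g hg, coeff_zero]

theorem derivation_eq_zero_of_coeffDerivation_eq_zero (hX : ∀ s, D (X s) = 0)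
    (h : ∀ γ, coeffDerivation D γ = 0) : D = 0 := by
  ext g γ
  rw [coeff_derivation_eq_coeffDerivation hX fun β _ => h β, h]
  simp

end CoeffDerivation

section MapDerivation

variable {k k' σ : Type*} [CommRing k] [CommRing k'] (f : k →+* k')

noncomputable def derivationMap (D : Derivation k (MvPolynomial σ k) (MvPolynomial σ k)) :
    Derivation k' (MvPolynomial σ k') (MvPolynomial σ k') :=
  mkDerivation k' fun i => map f (D (X i))

theorem derivationMap_map (D : Derivation k (MvPolynomial σ k) (MvPolynomial σ k))
    (q : MvPolynomial σ k) : derivationMap f D (map f q) = map f (D q) := by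
  induction q using induction_on with
  | C r => simp [derivation_C]
  | add q r hq hr => simp [hq, hr]
  | mul_X q i ih =>
    simp only [derivationMap] at ih ⊢
    simp [Derivation.leibniz, ih]

theorem eq_zero_of_derivationMap_eq_zero (hf : Function.Injective f)
    {D : Derivation k (MvPolynomial σ k) (MvPolynomial σ k)} (h : derivationMap f D = 0) :
    D = 0 :=
  derivation_ext fun i => map_injective f hf <| by
    rw [← derivationMap_map, map_X, h, Derivation.zero_apply, Derivation.zero_apply, map_zero]

theorem IsWeightedHomogeneous.map {M : Type*} [AddCommMonoid M] {w : σ → M} {m : M}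
    {φ : MvPolynomial σ k} (hφ : IsWeightedHomogeneous w φ m) :
    IsWeightedHomogeneous w (map f φ) m :=
  fun _ hd => hφ fun h => hd (by rw [coeff_map, h, map_zero])

end MapDerivation

end MvPolynomial

open MvPolynomial

section DerivationHasWt

variable {k : Type*} [CommRing k] {σ : Type*} {w : σ → ℤ} {b : ℤ}
  {D : Derivation k (MvPolynomial σ k) (MvPolynomial σ k)}

theorem DerivationHasWt.derivationMap {k' : Type*} [CommRing k'] (f : k →+* k')
    (hD : DerivationHasWt w b D) : DerivationHasWt w b (derivationMap f D) := fun s => by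
  rw [MvPolynomial.derivationMap, mkDerivation_X]
  exact (hD s).map f

theorem DerivationHasWt.coeffDerivation_splitVars (p : σ → Prop) [DecidablePred p]
    (hD : DerivationHasWt w b D) (γ : {s // p s} →₀ ℕ) :
    DerivationHasWt (fun t : {s // ¬p s} => w t)
      (b + Finsupp.weight (fun s : {s // p s} => w s) γ)
      (coeffDerivation (D.conjAlgEquiv (splitVars p)) γ) := fun t => by
  rw [coeffDerivation_apply, Derivation.conjAlgEquiv_apply, splitVars_symm_C_X]
  simpa only [sub_sub] using (hD t).coeff_splitVars p γ

end DerivationHasWt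

section Blocks

variable {k : Type*} [CommRing k] {n : ℕ} {c : Fin (n + 1) → ℕ}

theorem restrictBlocks_eq_map_coeff_zero (J : Ideal k) (f : MvPolynomial (BlockIdx n c) k) :
    restrictBlocks n c J f =
      map (Ideal.Quotient.mk J) (coeff 0 (splitVars (fun s : BlockIdx n c => s.1 = 0) f)) := by
  induction f using induction_on with
  | C r => simp [restrictBlocks]
  | add f g hf hg => simp [hf, hg]
  | mul_X f s hf =>
    rw [map_mul, map_mul]
    by_cases hs : s.1 = 0
    · rw [splitVars_X_of_pos (fun s : BlockIdx n c => s.1 = 0) hs, coeff_mul_X', if_neg (by simp),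
        map_zero]
      simp [restrictBlocks, hs]
    · rw [splitVars_X_of_neg (fun s : BlockIdx n c => s.1 = 0) hs, hf, mul_comm _ (C _),
        coeff_C_mul, map_mul, map_X]
      simp [restrictBlocks, hs, mul_comm]

def IsNondegenerate (a : Fin (n + 1) → ℕ) (V : Submodule k (MvPolynomial (BlockIdx n c) k)) :
    Prop :=
  ∀ (J : Ideal k) (b : ℕ), 0 < b →
    ∀ der : Derivation (k ⧸ J) (MvPolynomial {s : BlockIdx n c // s.1 ≠ 0} (k ⧸ J))
        (MvPolynomial {s : BlockIdx n c // s.1 ≠ 0} (k ⧸ J)),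
      DerivationHasWt (fun t : {s : BlockIdx n c // s.1 ≠ 0} => (a t.1.1 : ℤ)) (b : ℤ) der →
      (∀ f ∈ V, der (restrictBlocks n c J f) = 0) → der = 0

theorem weight_blockWt_zero (a : Fin (n + 1) → ℕ) (γ : {s : BlockIdx n c // s.1 = 0} →₀ ℕ) :
    Finsupp.weight (fun s => blockWt a s.1) γ = γ.degree • (a 0 : ℤ) := by
  have : (fun s : {s : BlockIdx n c // s.1 = 0} => blockWt a s.1) = fun _ => (a 0 : ℤ) :=
    funext fun s => by simp [blockWt, s.2]
  rw [this, Finsupp.weight_const]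

theorem IsNondegenerate.coeffDerivation_eq_zero {a : Fin (n + 1) → ℕ}
    {V : Submodule k (MvPolynomial (BlockIdx n c) k)} (hnd : IsNondegenerate a V) {b : ℕ}
    (hb : 0 < b)
    {der : Derivation k (MvPolynomial (BlockIdx n c) k) (MvPolynomial (BlockIdx n c) k)}
    (hder : DerivationHasWt (blockWt a) b der) (γ : {s : BlockIdx n c // s.1 = 0} →₀ ℕ)
    (hV : ∀ f ∈ V,
      coeffDerivation (der.conjAlgEquiv (splitVars (fun s : BlockIdx n c => s.1 = 0))) γ
        (coeff 0 (splitVars (fun s : BlockIdx n c => s.1 = 0) f)) = 0) :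
    coeffDerivation (der.conjAlgEquiv (splitVars (fun s : BlockIdx n c => s.1 = 0))) γ = 0 := by
  refine eq_zero_of_derivationMap_eq_zero (Ideal.Quotient.mk ⊥)
    (RingHom.injective_iff_ker_eq_bot _ |>.mpr (Ideal.mk_ker)) <|
    hnd ⊥ (b + γ.degree * a 0) (by omega) _ ?_ fun f hf => ?_
  · have := (hder.coeffDerivation_splitVars _ γ).derivationMap (Ideal.Quotient.mk ⊥)
    rw [weight_blockWt_zero, nsmul_eq_mul] at this
    exact_mod_cast this
  · rw [restrictBlocks_eq_map_coeff_zero, derivationMap_map, hV f hf, map_zero]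

end Blocks

theorem claim_II_e_general (k : Type*) [CommRing k]
    (n : ℕ) (c : Fin (n + 1) → ℕ)
    (a : Fin (n + 1) → ℕ)
    (V : Submodule k (MvPolynomial (BlockIdx n c) k))
    (hnd : ∀ (J : Ideal k) (b : ℕ), 0 < b →
      ∀ der : Derivation (k ⧸ J) (MvPolynomial {s : BlockIdx n c // s.1 ≠ 0} (k ⧸ J))
          (MvPolynomial {s : BlockIdx n c // s.1 ≠ 0} (k ⧸ J)),
        DerivationHasWt (fun t : {s : BlockIdx n c // s.1 ≠ 0} => (a t.1.1 : ℤ)) (b : ℤ) der →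
        (∀ f ∈ V, der (restrictBlocks n c J f) = 0) → der = 0) :
    ∀ b : ℕ, 0 < b →
      ∀ der : Derivation k (MvPolynomial (BlockIdx n c) k) (MvPolynomial (BlockIdx n c) k),
        DerivationHasWt (blockWt a) (b : ℤ) der →
        (∀ f ∈ V, der f = 0) →
        (∀ j : Fin (c 0), der (MvPolynomial.X (⟨0, j⟩ : BlockIdx n c)) = 0) →
        der = 0 := by
  intro b hb der hder hV hx0
  set Φ := splitVars (R := k) (fun s : BlockIdx n c => s.1 = 0)
  have hX : ∀ s, der.conjAlgEquiv Φ (X s) = 0 := by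
    rintro ⟨⟨i, j⟩, rfl : i = 0⟩
    rw [Derivation.conjAlgEquiv_apply, splitVars_symm_X, hx0, map_zero]
  have hW : ∀ g ∈ Φ '' V, der.conjAlgEquiv Φ g = 0 := by
    rintro _ ⟨f, hf, rfl⟩
    rw [Derivation.conjAlgEquiv_apply, AlgEquiv.symm_apply_apply, hV f hf, map_zero]
  rw [← Derivation.conjAlgEquiv_eq_zero_iff Φ]
  refine derivation_eq_zero_of_coeffDerivation_eq_zero hX <|
    coeffDerivation_eq_zero_of_forall hX hW fun γ hγ => ?_
  exact IsNondegenerate.coeffDerivation_eq_zero hnd hb hder γ fun f hf => hγ _ ⟨f, hf, rfl⟩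

/-- **Paper's Claim II.e**: the kernel of the Euler-sequence projection `pr` on `L_{-b}(V_d)`
consists only of the null derivation.  Under the nondegeneracy hypothesis II.c, for every
`b > 0`, every `k`-derivation of weight `-b` vanishing on `V_d` and killing all the
weight-`a 0` variables `x_{0j}` is zero. -/
theorem claim_II_e (k : Type*) [CommRing k] [CharZero k]
    (n : ℕ) (c : Fin (n + 1) → ℕ) (hc : ∀ i, 1 ≤ c i)
    (a : Fin (n + 1) → ℕ) (ha : StrictMono a) (ha0 : 0 < a 0)
    (d : ℕ)
    (V : Submodule k (MvPolynomial (BlockIdx n c) k))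
    (hV : ∀ f ∈ V, MvPolynomial.IsWeightedHomogeneous (blockWt a) f (d : ℤ))
    (hnd : ∀ (J : Ideal k) (b : ℕ), 0 < b →
      ∀ der : Derivation (k ⧸ J) (MvPolynomial {s : BlockIdx n c // s.1 ≠ 0} (k ⧸ J))
          (MvPolynomial {s : BlockIdx n c // s.1 ≠ 0} (k ⧸ J)),
        DerivationHasWt (fun t : {s : BlockIdx n c // s.1 ≠ 0} => (a t.1.1 : ℤ)) (b : ℤ) der →
        (∀ f ∈ V, der (restrictBlocks n c J f) = 0) → der = 0) :
    ∀ b : ℕ, 0 < b →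
      ∀ der : Derivation k (MvPolynomial (BlockIdx n c) k) (MvPolynomial (BlockIdx n c) k),
        DerivationHasWt (blockWt a) (b : ℤ) der →
        (∀ f ∈ V, der f = 0) →
        (∀ j : Fin (c 0), der (MvPolynomial.X (⟨0, j⟩ : BlockIdx n c)) = 0) →
        der = 0 :=
  claim_II_e_general k n c a V hnd
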